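/- arXiv:2406.15841 — 2 statements merged into one kernel-verified Lean document; each statement's English description precedes it below -/
import Mathlib

section
/- Let D be the digraph on n = n1 + n2 + 2 vertices consisting of disjoint complete digraphs K*_{n1}, K*_{n2}, new vertices u, v, the arc (w', w) for fixed w' ∈ V(K*_{n1}), w ∈ V(K*_{n2}), all arcs from V(K*_{n2}) to {u,v} ∪ V(K*_{n1}), and all arcs from u and v to V(K*_{n1}). Then D is strong but not supereulerian. -/
/-- A digraph: loopless, no parallel arcs (arcs given by a relation). -/
structure Digr (V : Type) where
  Adj : V → V → Prop
  loopless : ∀ v, ¬ Adj v v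

namespace Digr

variable {V : Type}

/-- The list of arcs (consecutive pairs) of a walk given by its list of vertices. -/
def arcs (l : List V) : List (V × V) := l.zip l.tail

/-- The vertex set of a walk. -/
def verts (l : List V) : Set V := {v | v ∈ l}

/-- A directed trail: a nonempty walk repeating no arc. -/
def IsDitrail (D : Digr V) (l : List V) : Prop :=
  l ≠ [] ∧ l.Chain' D.Adj ∧ (arcs l).Nodup

/-- A closed directed trail. -/
def IsClosedDitrail (D : Digr V) (l : List V) : Prop :=
  D.IsDitrail l ∧ l.head? = l.getLast?

/-- A digraph is supereulerian if it has a spanning closed ditrail. -/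
def Supereulerian (D : Digr V) : Prop :=
  ∃ l : List V, D.IsClosedDitrail l ∧ ∀ v : V, v ∈ l

/-- Strong connectivity. -/
def Strong (D : Digr V) : Prop :=
  ∀ u v : V, Relation.ReflTransGen D.Adj u v

noncomputable def outDeg (D : Digr V) (v : V) : ℕ := {w | D.Adj v w}.ncard
noncomputable def inDeg (D : Digr V) (v : V) : ℕ := {w | D.Adj w v}.ncard
noncomputable def deg (D : Digr V) (v : V) : ℕ := D.inDeg v + D.outDeg v

noncomputable def outDegOn (D : Digr V) (S : Set V) (v : V) : ℕ := {w ∈ S | D.Adj v w}.ncard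
noncomputable def inDegOn (D : Digr V) (S : Set V) (v : V) : ℕ := {w ∈ S | D.Adj w v}.ncard
noncomputable def degOn (D : Digr V) (S : Set V) (v : V) : ℕ := D.inDegOn S v + D.outDegOn S v

def Nonadjacent (D : Digr V) (u v : V) : Prop := ¬ D.Adj u v ∧ ¬ D.Adj v u
def Dominated (D : Digr V) (u v : V) : Prop := ∃ w, D.Adj w u ∧ D.Adj w v
def Dominating (D : Digr V) (u v : V) : Prop := ∃ w, D.Adj u w ∧ D.Adj v w

/-- A semicomplete multipartite digraph: a biorientation of a complete
multipartite graph, i.e. two vertices are joined by an arc (in some direction)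
iff they lie in different parts of some partition. -/
def IsSemicompleteMultipartite (D : Digr V) : Prop :=
  ∃ (ι : Type) (part : V → ι), ∀ u v : V, (D.Adj u v ∨ D.Adj v u) ↔ part u ≠ part v

end Digr

/-- The digraph of Example 1: two complete digraphs $K^*_{n_1}, K^*_{n_2}$,
two extra vertices $u, v$ (encoded as \`.inr (.inr 0)\` and \`.inr (.inr 1)\`),
the arc $(w', w)$, all arcs from $K^*_{n_2}$ to $\{u,v\} ∪ K^*_{n_1}$, and all
arcs from $u$ and $v$ to $K^*_{n_1}$. -/
def exDigr (n1 n2 : ℕ) (w' : Fin n1) (w : Fin n2) :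
    Digr (Fin n1 ⊕ (Fin n2 ⊕ Fin 2)) where
  Adj a b :=
    match a, b with
    | .inl a, .inl b => a ≠ b                      -- inside K*_{n1}
    | .inl a, .inr (.inl b) => a = w' ∧ b = w      -- only the arc (w', w)
    | .inl _, .inr (.inr _) => False               -- no arcs K*_{n1} → {u,v}
    | .inr (.inl _), .inl _ => True                -- K*_{n2} → K*_{n1}
    | .inr (.inl a), .inr (.inl b) => a ≠ b        -- inside K*_{n2}
    | .inr (.inl _), .inr (.inr _) => True         -- K*_{n2} → {u,v}
    | .inr (.inr _), .inl _ => True                -- {u,v} → K*_{n1}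
    | .inr (.inr _), .inr (.inl _) => False
    | .inr (.inr _), .inr (.inr _) => False        -- no arcs between/at u,v
  loopless v := by rcases v with a | b | c <;> simp


/-!
A closed walk leaves a vertex set `S` exactly as often as it enters it. Take `S = V(K*_{n₂})`:
the only arc of `D` entering `S` is `(w', w)`, so a closed trail enters `S` at most once, whereas
a spanning one must reach both `u` and `v`, whose in-neighbours all lie in `S`, hence leaves `S`
at least twice. Strong connectivity holds because every vertex reaches `w` and `w` reaches every
vertex.
-/

namespace Digr

variable {V : Type}

theorem arcs_cons_cons (x y : V) (t : List V) : arcs (x :: y :: t) = (x, y) :: arcs (y :: t) :=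
  rfl

theorem map_snd_arcs (l : List V) : (arcs l).map Prod.snd = l.tail :=
  List.map_snd_zip (by simp)

theorem exists_mem_arcs_snd_eq {l : List V} {v : V} (hv : v ∈ l.tail) :
    ∃ a ∈ arcs l, a.2 = v := by
  rwa [← map_snd_arcs, List.mem_map] at hv

theorem adj_of_mem_arcs (D : Digr V) :
    ∀ {l : List V}, l.IsChain D.Adj → ∀ {a : V × V}, a ∈ arcs l → D.Adj a.1 a.2
  | [], _, _, ha | [_], _, _, ha => by simp [arcs] at ha
  | x :: y :: t, hl, a, ha => by
    rw [arcs_cons_cons, List.mem_cons] at ha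
    rcases ha with rfl | ha
    · exact (List.isChain_cons_cons.1 hl).1
    · exact adj_of_mem_arcs D (List.isChain_cons_cons.1 hl).2 ha

theorem mem_tail_of_head?_eq_getLast? {x y v : V} {t : List V}
    (hl : (x :: y :: t).head? = (x :: y :: t).getLast?) (hv : v ∈ x :: y :: t) : v ∈ y :: t := by
  rcases List.mem_cons.1 hv with rfl | hv
  · rw [List.head?_cons, List.getLast?_cons_cons,
      List.getLast?_eq_some_getLast (List.cons_ne_nil _ _), Option.some_inj] at hl
    exact hl ▸ List.getLast_mem _
  · exact hv

open Classical in
noncomputable def exitArcs (S : Set V) (l : List V) : List (V × V) :=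
  (arcs l).filter fun a => a.1 ∈ S ∧ a.2 ∉ S

open Classical in
noncomputable def entryArcs (S : Set V) (l : List V) : List (V × V) :=
  (arcs l).filter fun a => a.1 ∉ S ∧ a.2 ∈ S

theorem mem_exitArcs {S : Set V} {l : List V} {a : V × V} :
    a ∈ exitArcs S l ↔ a ∈ arcs l ∧ a.1 ∈ S ∧ a.2 ∉ S := by
  simp [exitArcs]

theorem mem_entryArcs {S : Set V} {l : List V} {a : V × V} :
    a ∈ entryArcs S l ↔ a ∈ arcs l ∧ a.1 ∉ S ∧ a.2 ∈ S := by
  simp [entryArcs]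

open Classical in
theorem length_exitArcs_add (S : Set V) (x : V) :
    ∀ t : List V,
      (exitArcs S (x :: t)).length + (if (x :: t).getLast (List.cons_ne_nil _ _) ∈ S then 1 else 0)
        = (entryArcs S (x :: t)).length + if x ∈ S then 1 else 0
  | [] => by simp [exitArcs, entryArcs, arcs]; congr
  | y :: t => by
    have ih := length_exitArcs_add S y t
    simp only [exitArcs, entryArcs, arcs_cons_cons, List.filter_cons,
      List.getLast_cons (List.cons_ne_nil _ _)] at ih ⊢
    by_cases hx : x ∈ S <;> by_cases hy : y ∈ S <;> simp [hx, hy] at ih ⊢ <;> omega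

theorem length_exitArcs_eq_of_head?_eq_getLast? (S : Set V) {l : List V}
    (hl : l.head? = l.getLast?) : (exitArcs S l).length = (entryArcs S l).length := by
  rcases l with _ | ⟨x, t⟩
  · rfl
  · have h := length_exitArcs_add S x t
    rw [List.head?_cons, List.getLast?_eq_some_getLast (List.cons_ne_nil _ _),
      Option.some_inj] at hl
    rw [← hl] at h
    omega

end Digr

namespace exDigr

open Digr

variable {n1 n2 : ℕ} {w' : Fin n1} {w : Fin n2}

/-- The vertex set of $K^*_{n_2}$. -/
def K2 (n1 n2 : ℕ) : Set (Fin n1 ⊕ (Fin n2 ⊕ Fin 2)) := Set.range fun b => .inr (.inl b)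

theorem reaches_w (x : Fin n1 ⊕ (Fin n2 ⊕ Fin 2)) :
    Relation.ReflTransGen (exDigr n1 n2 w' w).Adj x (.inr (.inl w)) := by
  have hw' : (exDigr n1 n2 w' w).Adj (.inl w') (.inr (.inl w)) := ⟨rfl, rfl⟩
  rcases x with a | b | c
  · by_cases ha : a = w'
    · exact .single (ha ▸ hw')
    · exact .head (show (exDigr n1 n2 w' w).Adj (.inl a) (.inl w') from ha) (.single hw')
  · by_cases hb : b = w
    · exact hb ▸ .refl
    · exact .single (show (exDigr n1 n2 w' w).Adj (.inr (.inl b)) (.inr (.inl w)) from hb)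
  · exact .head (show (exDigr n1 n2 w' w).Adj (.inr (.inr c)) (.inl w') from trivial) (.single hw')

theorem w_reaches (y : Fin n1 ⊕ (Fin n2 ⊕ Fin 2)) :
    Relation.ReflTransGen (exDigr n1 n2 w' w).Adj (.inr (.inl w)) y := by
  rcases y with a | b | c
  · exact .single trivial
  · by_cases hb : b = w
    · exact hb ▸ .refl
    · exact .single (show (exDigr n1 n2 w' w).Adj (.inr (.inl w)) (.inr (.inl b)) from Ne.symm hb)
  · exact .single trivial

theorem eq_of_adj_of_not_mem_K2 {a b : Fin n1 ⊕ (Fin n2 ⊕ Fin 2)}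
    (hab : (exDigr n1 n2 w' w).Adj a b) (ha : a ∉ K2 n1 n2) (hb : b ∈ K2 n1 n2) :
    (a, b) = (.inl w', .inr (.inl w)) := by
  obtain ⟨b, rfl⟩ := hb
  rcases a with a | a | c
  · obtain ⟨rfl, rfl⟩ := hab
    rfl
  · exact absurd ⟨a, rfl⟩ ha
  · exact hab.elim

theorem mem_K2_of_adj_inr_inr {a : Fin n1 ⊕ (Fin n2 ⊕ Fin 2)} {c : Fin 2}
    (h : (exDigr n1 n2 w' w).Adj a (.inr (.inr c))) : a ∈ K2 n1 n2 := by
  rcases a with a | b | c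
  · exact h.elim
  · exact ⟨b, rfl⟩
  · exact h.elim

theorem length_entryArcs_K2_le_one {l : List (Fin n1 ⊕ (Fin n2 ⊕ Fin 2))}
    (hl : l.IsChain (exDigr n1 n2 w' w).Adj) (hnd : (arcs l).Nodup) :
    (entryArcs (K2 n1 n2) l).length ≤ 1 := by
  have hsub : entryArcs (K2 n1 n2) l ⊆ [(.inl w', .inr (.inl w))] := fun a ha => by
    obtain ⟨harc, ha1, ha2⟩ := mem_entryArcs.1 ha
    exact List.mem_singleton.2 (eq_of_adj_of_not_mem_K2 (adj_of_mem_arcs _ hl harc) ha1 ha2)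
  exact ((hnd.filter _).subperm hsub).length_le

theorem two_le_length_exitArcs_K2 {l : List (Fin n1 ⊕ (Fin n2 ⊕ Fin 2))}
    (hl : l.IsChain (exDigr n1 n2 w' w).Adj) (hnd : (arcs l).Nodup)
    (hclosed : l.head? = l.getLast?) (hspan : ∀ v, v ∈ l) :
    2 ≤ (exitArcs (K2 n1 n2) l).length := by
  obtain ⟨x, y, t, rfl⟩ : ∃ x y t, l = x :: y :: t := by
    match l, hspan with
    | [], h => exact absurd (h (.inr (.inr 0))) List.not_mem_nil
    | [x], h =>
      have h0 := List.mem_singleton.1 (h (.inr (.inr 0)))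
      have h1 := List.mem_singleton.1 (h (.inr (.inr 1)))
      exact absurd (h0.trans h1.symm) (by simp)
    | x :: y :: t, _ => exact ⟨x, y, t, rfl⟩
  have hexit (c : Fin 2) : ∃ a ∈ exitArcs (K2 n1 n2) (x :: y :: t), a.2 = .inr (.inr c) := by
    obtain ⟨⟨a, _⟩, harc, rfl⟩ := exists_mem_arcs_snd_eq (l := x :: y :: t)
      (mem_tail_of_head?_eq_getLast? hclosed (hspan (.inr (.inr c))))
    refine ⟨_, mem_exitArcs.2 ⟨harc, mem_K2_of_adj_inr_inr (adj_of_mem_arcs _ hl harc), ?_⟩, rfl⟩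
    simp [K2]
  obtain ⟨a0, ha0, ha0c⟩ := hexit 0
  obtain ⟨a1, ha1, ha1c⟩ := hexit 1
  have hne : a0 ≠ a1 := fun h => by simp [h, ha1c] at ha0c
  have hsub : [a0, a1] ⊆ exitArcs (K2 n1 n2) (x :: y :: t) := by simp [ha0, ha1]
  exact ((show [a0, a1].Nodup by simp [hne]).subperm hsub).length_le

end exDigr

/-- The digraph of Example 1 is strong but not supereulerian. -/
theorem stmt10 (n1 n2 : ℕ) (w' : Fin n1) (w : Fin n2) :
    (exDigr n1 n2 w' w).Strong ∧ ¬ (exDigr n1 n2 w' w).Supereulerian := by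
  refine ⟨fun x y => (exDigr.reaches_w x).trans (exDigr.w_reaches y), ?_⟩
  rintro ⟨l, ⟨⟨-, hchain, hnodup⟩, hclosed⟩, hspan⟩
  have hentry := exDigr.length_entryArcs_K2_le_one hchain hnodup
  have hexit := exDigr.two_le_length_exitArcs_K2 hchain hnodup hclosed hspan
  have := Digr.length_exitArcs_eq_of_head?_eq_getLast? (exDigr.K2 n1 n2) hclosed
  omega
end

section
/- Let D be a nonsupereulerian strong semicomplete multipartite digraph and let S, T, P, W be as in the standard maximal closed ditrail setup (S a maximum-order closed ditrail, T = y_0 x_1 ⋯ x_t y_{p+1} an (S,S)-dipath chosen with shortest S-segment P having internal vertex set W, and each x_i nonadjacent to each vertex of W). Then t = 1 and |W| = 1; i.e., T = y_0 x_1 y_2 and P = y_0 y_1 y_2. -/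
/-!
In a semicomplete multipartite digraph two vertices are nonadjacent exactly when they lie in the
same part, so two vertices that are both nonadjacent to a third one are not joined by an arc.
Every vertex of `X` is nonadjacent to a vertex of `W`, and every vertex of `W` to a vertex of
`X`; as consecutive vertices of `T` and of `P` are joined by arcs, `X` and `W` are singletons once
they are nonempty. And `W` is nonempty: otherwise `y₀ yq` is an arc of `S`, and replacing it by
`T` gives a closed ditrail through more vertices than `S`.
-/

namespace Digr

variable {V : Type}

lemma Nonadjacent.symm {D : Digr V} {u v : V} (h : D.Nonadjacent u v) : D.Nonadjacent v u :=
  ⟨h.2, h.1⟩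

lemma IsSemicompleteMultipartite.not_adj_of_nonadjacent {D : Digr V}
    (hD : D.IsSemicompleteMultipartite) {u v w : V}
    (hu : D.Nonadjacent u w) (hv : D.Nonadjacent v w) : ¬ D.Adj u v := by
  obtain ⟨ι, part, hpart⟩ := hD
  have same_part {a b : V} (h : D.Nonadjacent a b) : part a = part b :=
    not_not.1 fun hne => ((hpart a b).2 hne).elim h.1 h.2
  exact fun huv => (hpart u v).1 (Or.inl huv) ((same_part hu).trans (same_part hv).symm)

lemma IsSemicompleteMultipartite.length_eq_one_of_isChain {D : Digr V}
    (hD : D.IsSemicompleteMultipartite) {l : List V} {w : V}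
    (hl : l.IsChain D.Adj) (hne : l ≠ []) (hw : ∀ v ∈ l, D.Nonadjacent v w) :
    l.length = 1 := by
  match l, hl with
  | [_], _ => rfl
  | a :: b :: _, hl =>
    exact absurd (List.isChain_cons_cons.1 hl).1
      (hD.not_adj_of_nonadjacent (hw a (by simp)) (hw b (by simp)))

lemma arcs_cons_cons_s15 (a b : V) (l : List V) :
    arcs (a :: b :: l) = (a, b) :: arcs (b :: l) := rfl

lemma arcs_append_cons (l₁ : List V) (x : V) (l₂ : List V) :
    arcs (l₁ ++ x :: l₂) = arcs (l₁ ++ [x]) ++ arcs (x :: l₂) := by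
  induction l₁ with
  | nil => rfl
  | cons a l ih =>
    cases l with
    | nil => rfl
    | cons b t =>
      simp only [List.cons_append, arcs_cons_cons_s15] at ih ⊢
      rw [ih]

lemma mem_of_mem_arcs {l : List V} {p : V × V} (h : p ∈ arcs l) : p.1 ∈ l ∧ p.2 ∈ l :=
  ⟨(List.of_mem_zip h).1, List.mem_of_mem_tail (List.of_mem_zip h).2⟩

lemma fst_mem_dropLast_of_mem_arcs {l : List V} {p : V × V} (h : p ∈ arcs l) :
    p.1 ∈ l.dropLast := by
  match l, h with
  | a :: b :: t, h =>
    rw [arcs_cons_cons_s15, List.mem_cons] at h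
    rcases h with rfl | h
    · simp
    · exact List.mem_cons_of_mem a (fst_mem_dropLast_of_mem_arcs h)

lemma nodup_arcs {l : List V} (h : l.Nodup) : (arcs l).Nodup := by
  match l with
  | [] | [_] => exact List.nodup_nil
  | a :: b :: t =>
    rw [arcs_cons_cons_s15]
    exact List.nodup_cons.2
      ⟨fun hmem => (List.nodup_cons.1 h).1 (mem_of_mem_arcs hmem).1, nodup_arcs h.of_cons⟩

lemma exists_eq_append_of_mem_arcs {l : List V} {u v : V} (h : (u, v) ∈ arcs l) :
    ∃ A B, l = A ++ u :: v :: B := by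
  match l, h with
  | a :: b :: t, h =>
    rw [arcs_cons_cons_s15, List.mem_cons] at h
    rcases h with h | h
    · obtain ⟨rfl, rfl⟩ := Prod.mk.inj h
      exact ⟨[], t, rfl⟩
    · obtain ⟨A, B, hAB⟩ := exists_eq_append_of_mem_arcs h
      exact ⟨a :: A, B, by rw [hAB]; rfl⟩

lemma mem_or_mem_of_mem_arcs_detour {u v : V} {X : List V} (hX : X ≠ []) {p : V × V}
    (hp : p ∈ arcs (u :: (X ++ [v]))) : p.1 ∈ X ∨ p.2 ∈ X := by
  obtain ⟨x, X', rfl⟩ := List.exists_cons_of_ne_nil hX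
  rw [List.cons_append, arcs_cons_cons_s15, List.mem_cons] at hp
  rcases hp with rfl | hp
  · simp
  · left
    simpa only [← List.cons_append, List.dropLast_concat] using fst_mem_dropLast_of_mem_arcs hp

lemma mem_arcs_of_dropLast_tail_eq_nil {l : List V} {u v : V} (hu : l.head? = some u)
    (hv : l.getLast? = some v) (huv : u ≠ v) (hl : l.dropLast.tail = []) : (u, v) ∈ arcs l := by
  match l with
  | [] => simp at hu
  | [a] => simp_all
  | [a, b] => simp_all [arcs]
  | _ :: _ :: _ :: _ => simp at hl

lemma IsClosedDitrail.splice {D : Digr V} {A B X : List V} {u v : V}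
    (hS : D.IsClosedDitrail (A ++ u :: v :: B)) (hT : (u :: (X ++ [v])).IsChain D.Adj)
    (hTarcs : (arcs (u :: (X ++ [v]))).Nodup)
    (hdisj : ∀ p ∈ arcs (u :: (X ++ [v])), p ∉ arcs (A ++ u :: v :: B)) :
    D.IsClosedDitrail (A ++ u :: (X ++ v :: B)) := by
  obtain ⟨⟨-, hchain, hnodup⟩, hclosed⟩ := hS
  have harcsS : arcs (A ++ u :: v :: B) = arcs (A ++ [u]) ++ (u, v) :: arcs (v :: B) := by
    rw [arcs_append_cons, arcs_cons_cons_s15]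
  have harcsS' : arcs (A ++ u :: (X ++ v :: B)) =
      arcs (A ++ [u]) ++ (arcs (u :: (X ++ [v])) ++ arcs (v :: B)) := by
    rw [arcs_append_cons, show u :: (X ++ v :: B) = (u :: X) ++ v :: B from rfl,
      arcs_append_cons (u :: X)]
    rfl
  refine ⟨⟨by simp, ?chain, ?nodup⟩, ?closed⟩
  case chain =>
    change List.IsChain _ _
    have hleft : (A ++ [u]).IsChain D.Adj := by
      rw [← List.singleton_append, ← List.append_assoc] at hchain
      exact hchain.left_of_append
    have hright : (v :: B).IsChain D.Adj := by
      rw [List.append_cons, List.append_assoc] at hchain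
      exact hchain.right_of_append.right_of_append
    have hAT : (A ++ u :: X ++ [v]).IsChain D.Adj := by
      simpa using hleft.append_overlap hT (List.cons_ne_nil _ _)
    simpa using hAT.append_overlap hright (List.cons_ne_nil _ _)
  case nodup =>
    have hrest : (arcs (A ++ [u]) ++ arcs (v :: B)).Nodup :=
      (List.nodup_cons.1 (List.nodup_middle.1 (harcsS ▸ hnodup))).2
    rw [harcsS', (List.perm_append_comm_assoc _ _ _).nodup_iff, List.nodup_append]
    refine ⟨hTarcs, hrest, fun p hp q hq hpq => hdisj p hp ?_⟩
    rw [harcsS, hpq]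
    simp only [List.mem_append, List.mem_cons] at hq ⊢
    tauto
  case closed =>
    have hhead : (A ++ u :: (X ++ v :: B)).head? = (A ++ u :: v :: B).head? := by
      cases A <;> rfl
    rw [hhead, hclosed, List.getLast?_append_cons, List.getLast?_append_cons,
      show u :: (X ++ v :: B) = (u :: X) ++ v :: B from rfl, List.getLast?_append_cons,
      ← List.singleton_append, List.getLast?_append_cons]

lemma ncard_verts_lt_splice {A B X : List V} {u v x : V} (hx : x ∈ X)
    (hxS : x ∉ A ++ u :: v :: B) :
    (verts (A ++ u :: v :: B)).ncard < (verts (A ++ u :: (X ++ v :: B))).ncard := by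
  refine Set.ncard_lt_ncard ⟨fun w hw => ?_, fun hsub => hxS (hsub ?_)⟩ (List.finite_toSet _)
  · change w ∈ A ++ u :: v :: B at hw
    show w ∈ A ++ u :: (X ++ v :: B)
    simp only [List.mem_append, List.mem_cons] at hw ⊢
    tauto
  · simp [verts, hx]

lemma IsClosedDitrail.notMem_arcs_of_detour {D : Digr V} {S X : List V} {u v : V}
    (hS : D.IsClosedDitrail S)
    (hSmax : ∀ S' : List V, D.IsClosedDitrail S' → (verts S').ncard ≤ (verts S).ncard)
    (hX : X ≠ []) (hT : (u :: (X ++ [v])).IsChain D.Adj) (hTnodup : (u :: (X ++ [v])).Nodup)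
    (hXoff : ∀ x ∈ X, x ∉ S) : (u, v) ∉ arcs S := by
  intro huv
  obtain ⟨A, B, rfl⟩ := exists_eq_append_of_mem_arcs huv
  have hdisj : ∀ p ∈ arcs (u :: (X ++ [v])), p ∉ arcs (A ++ u :: v :: B) := fun p hp hpS =>
    (mem_or_mem_of_mem_arcs_detour hX hp).elim
      (fun h => hXoff _ h (mem_of_mem_arcs hpS).1) (fun h => hXoff _ h (mem_of_mem_arcs hpS).2)
  obtain ⟨x, hx⟩ := List.exists_mem_of_ne_nil X hX
  exact (hSmax _ (hS.splice hT (nodup_arcs hTnodup) hdisj)).not_gt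
    (ncard_verts_lt_splice hx (hXoff x hx))

end Digr

theorem stmt15_general {V : Type} (D : Digr V) (S : List V)
    (hsm : D.IsSemicompleteMultipartite)
    (hS : D.IsClosedDitrail S)
    (hSmax : ∀ S' : List V, D.IsClosedDitrail S' →
      (Digr.verts S').ncard ≤ (Digr.verts S).ncard)
    (y0 yq : V) (X : List V) (P : List V)
    (hX : X ≠ [])
    (hTchain : (y0 :: (X ++ [yq])).Chain' D.Adj)
    (hTnodup : (y0 :: (X ++ [yq])).Nodup)
    (hXoff : ∀ x ∈ X, x ∉ S)
    (hP : D.IsDitrail P) (hPsub : ∀ a ∈ Digr.arcs P, a ∈ Digr.arcs S)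
    (hPh : P.head? = some y0) (hPl : P.getLast? = some yq)
    (hnonadj : ∀ x ∈ X, ∀ y ∈ P.dropLast.tail, D.Nonadjacent x y) :
    X.length = 1 ∧ P.dropLast.tail.length = 1 := by
  have hy0q : y0 ≠ yq := fun h => by simp [h] at hTnodup
  have hW : P.dropLast.tail ≠ [] := fun hW =>
    hS.notMem_arcs_of_detour hSmax hX hTchain hTnodup hXoff
      (hPsub _ (Digr.mem_arcs_of_dropLast_tail_eq_nil hPh hPl hy0q hW))
  have hXchain : X.IsChain D.Adj :=
    hTchain.infix ⟨[y0], [yq], by simp⟩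
  have hWchain : P.dropLast.tail.IsChain D.Adj :=
    hP.2.1.infix ((List.tail_suffix _).isInfix.trans (List.dropLast_prefix _).isInfix)
  obtain ⟨x, hx⟩ := List.exists_mem_of_ne_nil X hX
  obtain ⟨y, hy⟩ := List.exists_mem_of_ne_nil _ hW
  exact ⟨hsm.length_eq_one_of_isChain hXchain hX fun x' hx' => hnonadj x' hx' y hy,
    hsm.length_eq_one_of_isChain hWchain hW fun y' hy' => (hnonadj x hx y' hy').symm⟩

/-- In a nonsupereulerian strong semicomplete multipartite digraph, with the
standard setup (maximum-order closed ditrail $S$, $(S,S)$-dipath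
$T = y_0 x_1 ⋯ x_t y_{p+1}$ with internal vertex list $X$ chosen so that the
$S$-segment $P$ is shortest, internal vertices of $P$ pairwise nonadjacent
to those of $T$), both $T$ and $P$ have exactly one internal vertex. -/
theorem stmt15 {V : Type} (D : Digr V) (S : List V)
    (hsm : D.IsSemicompleteMultipartite)
    (hstrong : D.Strong) (hnse : ¬ D.Supereulerian)
    (hS : D.IsClosedDitrail S)
    (hSmax : ∀ S' : List V, D.IsClosedDitrail S' →
      (Digr.verts S').ncard ≤ (Digr.verts S).ncard)
    (y0 yq : V) (X : List V) (P : List V)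
    (hX : X ≠ [])
    (hTchain : (y0 :: (X ++ [yq])).Chain' D.Adj)
    (hTnodup : (y0 :: (X ++ [yq])).Nodup)
    (hy0 : y0 ∈ S) (hyq : yq ∈ S) (hXoff : ∀ x ∈ X, x ∉ S)
    (hP : D.IsDitrail P) (hPsub : ∀ a ∈ Digr.arcs P, a ∈ Digr.arcs S)
    (hPh : P.head? = some y0) (hPl : P.getLast? = some yq)
    (hmin : ∀ (y0' yq' : V) (X' P' : List V), X' ≠ [] →
      (y0' :: (X' ++ [yq'])).Chain' D.Adj → (y0' :: (X' ++ [yq'])).Nodup →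
      y0' ∈ S → yq' ∈ S → (∀ x ∈ X', x ∉ S) →
      D.IsDitrail P' → (∀ a ∈ Digr.arcs P', a ∈ Digr.arcs S) →
      P'.head? = some y0' → P'.getLast? = some yq' →
      (Digr.arcs P).length ≤ (Digr.arcs P').length)
    (hnonadj : ∀ x ∈ X, ∀ y ∈ P.dropLast.tail, D.Nonadjacent x y) :
    X.length = 1 ∧ P.dropLast.tail.length = 1 :=
  stmt15_general D S hsm hS hSmax y0 yq X P hX hTchain hTnodup hXoff hP hPsub hPh hPl hnonadj
end
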